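/- arXiv:2007.14654 — 6 statements merged into one kernel-verified Lean document; each statement's English description precedes it below -/
import Mathlib

section
/- Let D^x ⊆ ℝ^n be open and let D^z ⊆ ℝ^s be open and symmetric (i.e., z ∈ D^z implies Σz ∈ D^z for every diagonal matrix Σ with diagonal entries in {−1,0,1}). Let cE : D^x × D^z → ℝ^{m₁}, cI : D^x × D^z → ℝ^{m₂}, cZ : D^x × D^z → ℝ^s be continuous. Define F_abs = {(x,z) ∈ D^x × D^z : cE(x,|z|) = 0, cI(x,|z|) ≥ 0, cZ(x,|z|) = z} and F_mpcc = {(x,u,v) ∈ D^x × ℝ^s × ℝ^s : u+v ∈ D^z, u ≥ 0, v ≥ 0, uᵢvᵢ = 0 for all i, cE(x,u+v) = 0, cI(x,u+v) ≥ 0, cZ(x,u+v) = u−v}. Then the map φ(x,u,v) = (x, u−v) is a homeomorphism from F_mpcc onto F_abs with inverse φ⁻¹(x,z) = (x, [z]⁺, [z]⁻). -/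
/-! If `u, v ≥ 0` are complementary, i.e. `u ⊓ v = 0`, then `(u - v)⁺ = u`, `(u - v)⁻ = v` and
`|u - v| = u + v`; conversely `z = z⁺ - z⁻` with `z⁺ + z⁻ = |z|` and `z⁺, z⁻` complementary. So
`(x, u, v) ↦ (x, u - v)` and `(x, z) ↦ (x, z⁺, z⁻)` are mutually inverse and carry the constraints
`c(x, u + v)` and `c(x, |z|)` into each other. The domain condition transfers because a sign-symmetric
set contains `z` iff it contains `|z| = sign z * z`. Both maps are restrictions of continuous maps. -/

/-- componentwise positive part -/
def posPart' {s : ℕ} (z : Fin s → ℝ) : Fin s → ℝ := fun i => max (z i) 0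

/-- componentwise negative part -/
def negPart' {s : ℕ} (z : Fin s → ℝ) : Fin s → ℝ := fun i => max (-z i) 0

/-- componentwise absolute value -/
def vabs {s : ℕ} (z : Fin s → ℝ) : Fin s → ℝ := fun i => |z i|

/-- Feasible set of the abs-normal NLP. -/
def Fabs {n s m₁ m₂ : ℕ} (Dx : Set (Fin n → ℝ)) (Dz : Set (Fin s → ℝ))
    (cE : (Fin n → ℝ) × (Fin s → ℝ) → Fin m₁ → ℝ)
    (cI : (Fin n → ℝ) × (Fin s → ℝ) → Fin m₂ → ℝ)
    (cZ : (Fin n → ℝ) × (Fin s → ℝ) → Fin s → ℝ) :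
    Set ((Fin n → ℝ) × (Fin s → ℝ)) :=
  {p | p.1 ∈ Dx ∧ p.2 ∈ Dz ∧ cE (p.1, vabs p.2) = 0 ∧
    (∀ j, 0 ≤ cI (p.1, vabs p.2) j) ∧ cZ (p.1, vabs p.2) = p.2}

/-- Feasible set of the counterpart MPCC. -/
def Fmpcc {n s m₁ m₂ : ℕ} (Dx : Set (Fin n → ℝ)) (Dz : Set (Fin s → ℝ))
    (cE : (Fin n → ℝ) × (Fin s → ℝ) → Fin m₁ → ℝ)
    (cI : (Fin n → ℝ) × (Fin s → ℝ) → Fin m₂ → ℝ)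
    (cZ : (Fin n → ℝ) × (Fin s → ℝ) → Fin s → ℝ) :
    Set ((Fin n → ℝ) × (Fin s → ℝ) × (Fin s → ℝ)) :=
  {q | q.1 ∈ Dx ∧ q.2.1 + q.2.2 ∈ Dz ∧ (∀ i, 0 ≤ q.2.1 i) ∧ (∀ i, 0 ≤ q.2.2 i) ∧
    (∀ i, q.2.1 i * q.2.2 i = 0) ∧ cE (q.1, q.2.1 + q.2.2) = 0 ∧
    (∀ j, 0 ≤ cI (q.1, q.2.1 + q.2.2) j) ∧ cZ (q.1, q.2.1 + q.2.2) = q.2.1 - q.2.2}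

section DisjointParts

variable {α : Type*} [Lattice α] [AddCommGroup α] [AddLeftMono α] {a b : α}

theorem posPart_sub_of_inf_eq_zero (h : a ⊓ b = 0) : (a - b)⁺ = a := by
  have := inf_eq_sub_posPart_sub a b
  rw [h, eq_comm, sub_eq_zero] at this
  exact this.symm

theorem negPart_sub_of_inf_eq_zero (h : a ⊓ b = 0) : (a - b)⁻ = b := by
  rw [← posPart_neg, neg_sub, posPart_sub_of_inf_eq_zero (by rwa [inf_comm])]

theorem abs_sub_of_inf_eq_zero (h : a ⊓ b = 0) : |a - b| = a + b := by
  rw [← posPart_add_negPart, posPart_sub_of_inf_eq_zero h, negPart_sub_of_inf_eq_zero h]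

end DisjointParts

section LinearOrderedRing

variable {α : Type*} [Ring α] [LinearOrder α] [IsStrictOrderedRing α]

theorem Pi.inf_eq_zero_of_mul_eq_zero {ι : Type*} {u v : ι → α} (hu : ∀ i, 0 ≤ u i)
    (hv : ∀ i, 0 ≤ v i) (huv : ∀ i, u i * v i = 0) : u ⊓ v = 0 :=
  funext fun i => by rcases mul_eq_zero.1 (huv i) with h | h <;> simp [h, hu i, hv i]

theorem posPart_mul_negPart (a : α) : a⁺ * a⁻ = 0 := by
  rcases le_total a 0 with h | h
  · simp [posPart_eq_zero.2 h]
  · simp [negPart_eq_zero.2 h]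

end LinearOrderedRing

def IsSignSymmetric {ι : Type*} (D : Set (ι → ℝ)) : Prop :=
  ∀ z ∈ D, ∀ σ : ι → ℝ, (∀ i, σ i = -1 ∨ σ i = 0 ∨ σ i = 1) → (fun i => σ i * z i) ∈ D

theorem IsSignSymmetric.abs_mem_iff {ι : Type*} {D : Set (ι → ℝ)} (hD : IsSignSymmetric D)
    {z : ι → ℝ} : |z| ∈ D ↔ z ∈ D := by
  have hsign : ∀ i, (SignType.sign (z i) : ℝ) = -1 ∨ (SignType.sign (z i) : ℝ) = 0 ∨
      (SignType.sign (z i) : ℝ) = 1 := fun i => by cases SignType.sign (z i) <;> simp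
  constructor
  · intro h
    simpa only [Pi.abs_apply, sign_mul_abs] using hD _ h _ hsign
  · intro h
    show (fun i => |z i|) ∈ D
    simpa only [sign_mul_self] using hD _ h _ hsign

example {s : ℕ} : Continuous (fun z : Fin s → ℝ => z⁺) := continuous_pi fun i => continuous_posPart.comp (continuous_apply i)

@[fun_prop]
theorem Pi.continuous_posPart {ι : Type*} : Continuous fun z : ι → ℝ => z⁺ :=
  continuous_pi fun i => (continuous_apply i).max continuous_const

@[fun_prop]
theorem Pi.continuous_negPart {ι : Type*} : Continuous fun z : ι → ℝ => z⁻ :=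
  continuous_pi fun i => (continuous_apply i).neg.max continuous_const

theorem vabs_eq_abs {s : ℕ} (z : Fin s → ℝ) : vabs z = |z| := rfl

section Feasible

variable {n s m₁ m₂ : ℕ} {Dx : Set (Fin n → ℝ)} {Dz : Set (Fin s → ℝ)}
  {cE : (Fin n → ℝ) × (Fin s → ℝ) → Fin m₁ → ℝ} {cI : (Fin n → ℝ) × (Fin s → ℝ) → Fin m₂ → ℝ}
  {cZ : (Fin n → ℝ) × (Fin s → ℝ) → Fin s → ℝ}

theorem sub_mem_Fabs_of_mem_Fmpcc (hDz : IsSignSymmetric Dz) {x : Fin n → ℝ} {u v : Fin s → ℝ}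
    (hq : (x, u, v) ∈ Fmpcc Dx Dz cE cI cZ) : (x, u - v) ∈ Fabs Dx Dz cE cI cZ := by
  obtain ⟨hx, hz, hu, hv, huv, hE, hI, hZ⟩ := hq
  have habs : |u - v| = u + v :=
    abs_sub_of_inf_eq_zero (Pi.inf_eq_zero_of_mul_eq_zero hu hv huv)
  refine ⟨hx, hDz.abs_mem_iff.1 ?_, ?_, ?_, ?_⟩ <;> simpa only [vabs_eq_abs, habs]

theorem parts_mem_Fmpcc_of_mem_Fabs (hDz : IsSignSymmetric Dz) {x : Fin n → ℝ} {z : Fin s → ℝ}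
    (hp : (x, z) ∈ Fabs Dx Dz cE cI cZ) : (x, z⁺, z⁻) ∈ Fmpcc Dx Dz cE cI cZ := by
  obtain ⟨hx, hz, hE, hI, hZ⟩ := hp
  refine ⟨hx, ?_, fun i => posPart_nonneg (z i), fun i => negPart_nonneg (z i),
    fun i => posPart_mul_negPart (z i), ?_⟩ <;>
    simp only [posPart_add_negPart, posPart_sub_negPart]
  · exact hDz.abs_mem_iff.2 hz
  · exact ⟨hE, hI, hZ⟩

def mpccHomeomorphAbs (hDz : IsSignSymmetric Dz) :
    Fmpcc Dx Dz cE cI cZ ≃ₜ Fabs Dx Dz cE cI cZ where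
  toFun q := ⟨(q.1.1, q.1.2.1 - q.1.2.2), sub_mem_Fabs_of_mem_Fmpcc hDz q.2⟩
  invFun p := ⟨(p.1.1, p.1.2⁺, p.1.2⁻), parts_mem_Fmpcc_of_mem_Fabs hDz p.2⟩
  left_inv := by
    rintro ⟨⟨x, u, v⟩, ⟨-, -, hu, hv, huv, -⟩⟩
    have hinf := Pi.inf_eq_zero_of_mul_eq_zero hu hv huv
    simp only [posPart_sub_of_inf_eq_zero hinf, negPart_sub_of_inf_eq_zero hinf]
  right_inv := by
    rintro ⟨⟨x, z⟩, -⟩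
    simp only [posPart_sub_negPart]
  continuous_toFun := by fun_prop
  continuous_invFun := by fun_prop

end Feasible

theorem stmt1_general {n s m₁ m₂ : ℕ}
    (Dx : Set (Fin n → ℝ)) (Dz : Set (Fin s → ℝ))
    (hsym : ∀ z ∈ Dz, ∀ σ : Fin s → ℝ, (∀ i, σ i = -1 ∨ σ i = 0 ∨ σ i = 1) →
      (fun i => σ i * z i) ∈ Dz)
    (cE : (Fin n → ℝ) × (Fin s → ℝ) → Fin m₁ → ℝ)
    (cI : (Fin n → ℝ) × (Fin s → ℝ) → Fin m₂ → ℝ)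
    (cZ : (Fin n → ℝ) × (Fin s → ℝ) → Fin s → ℝ) :
    ∃ h : Fmpcc Dx Dz cE cI cZ ≃ₜ Fabs Dx Dz cE cI cZ,
      (∀ q : Fmpcc Dx Dz cE cI cZ,
        (h q : (Fin n → ℝ) × (Fin s → ℝ)) =
          ((q : (Fin n → ℝ) × (Fin s → ℝ) × (Fin s → ℝ)).1,
           (q : (Fin n → ℝ) × (Fin s → ℝ) × (Fin s → ℝ)).2.1 -
           (q : (Fin n → ℝ) × (Fin s → ℝ) × (Fin s → ℝ)).2.2)) ∧
      (∀ p : Fabs Dx Dz cE cI cZ,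
        (h.symm p : (Fin n → ℝ) × (Fin s → ℝ) × (Fin s → ℝ)) =
          ((p : (Fin n → ℝ) × (Fin s → ℝ)).1,
           posPart' (p : (Fin n → ℝ) × (Fin s → ℝ)).2,
           negPart' (p : (Fin n → ℝ) × (Fin s → ℝ)).2)) := by
  exact ⟨mpccHomeomorphAbs hsym, fun _ => rfl, fun _ => rfl⟩

/-- The map `φ(x,u,v) = (x, u - v)` is a homeomorphism from the MPCC feasible set
onto the abs-normal feasible set, with inverse `φ⁻¹(x,z) = (x, [z]⁺, [z]⁻)`. -/
theorem stmt1 {n s m₁ m₂ : ℕ}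
    (Dx : Set (Fin n → ℝ)) (Dz : Set (Fin s → ℝ))
    (hDx : IsOpen Dx) (hDz : IsOpen Dz)
    (hsym : ∀ z ∈ Dz, ∀ σ : Fin s → ℝ, (∀ i, σ i = -1 ∨ σ i = 0 ∨ σ i = 1) →
      (fun i => σ i * z i) ∈ Dz)
    (cE : (Fin n → ℝ) × (Fin s → ℝ) → Fin m₁ → ℝ)
    (cI : (Fin n → ℝ) × (Fin s → ℝ) → Fin m₂ → ℝ)
    (cZ : (Fin n → ℝ) × (Fin s → ℝ) → Fin s → ℝ)
    (hcE : ContinuousOn cE (Dx ×ˢ Dz))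
    (hcI : ContinuousOn cI (Dx ×ˢ Dz))
    (hcZ : ContinuousOn cZ (Dx ×ˢ Dz)) :
    ∃ h : Fmpcc Dx Dz cE cI cZ ≃ₜ Fabs Dx Dz cE cI cZ,
      (∀ q : Fmpcc Dx Dz cE cI cZ,
        (h q : (Fin n → ℝ) × (Fin s → ℝ)) =
          ((q : (Fin n → ℝ) × (Fin s → ℝ) × (Fin s → ℝ)).1,
           (q : (Fin n → ℝ) × (Fin s → ℝ) × (Fin s → ℝ)).2.1 -
           (q : (Fin n → ℝ) × (Fin s → ℝ) × (Fin s → ℝ)).2.2)) ∧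
      (∀ p : Fabs Dx Dz cE cI cZ,
        (h.symm p : (Fin n → ℝ) × (Fin s → ℝ) × (Fin s → ℝ)) =
          ((p : (Fin n → ℝ) × (Fin s → ℝ)).1,
           posPart' (p : (Fin n → ℝ) × (Fin s → ℝ)).2,
           negPart' (p : (Fin n → ℝ) × (Fin s → ℝ)).2)) :=
  stmt1_general Dx Dz hsym cE cI cZ
end

section
/- Let J_E ∈ ℝ^{m₁×n}, J_I ∈ ℝ^{m₂×n}, J_α ∈ ℝ^{p×n} be real matrices and let w ∈ ℝ^{m₂}. Set A = {i ∈ {1,…,m₂} : wᵢ = 0} and Σ^w = diag(sign(w)) ∈ ℝ^{m₂×m₂}. Then the block matrix M = [[J_E, 0], [J_I, −Σ^w], [J_α, 0], [0, P_A]] ∈ ℝ^{(m₁+m₂+p+|A|)×(n+m₂)} has full row rank if and only if the matrix [[J_E], [P_A J_I], [J_α]] ∈ ℝ^{(m₁+|A|+p)×n} has full row rank. (This is the equivalence between LIKQ for the abs-normal NLP with inequalities and LIKQ for its slack reformulation, expressed at the level of the Jacobians; in particular it is independent of the choice of slack vector w with prescribed zero set A.) -/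
open Matrix
open scoped Classical

noncomputable section

/-- Selection matrix `P_S` whose rows are the unit row vectors `eᵢᵀ`, `i ∈ S`. -/
def sel {k : ℕ} (p : Fin k → Prop) : Matrix {i // p i} (Fin k) ℝ :=
  Matrix.of fun i j => if (i : Fin k) = j then 1 else 0

/-!
Full row rank means a trivial left kernel. In the slack columns a left-kernel vector
`(a, b, c, d)` of the slack Jacobian satisfies `dᵀ P_A = bᵀ Σ^w`; since `sign (w j)` vanishes
exactly on `A`, this forces `d = 0` and `b = P_Aᵀ e` with `e = b|_A`. The remaining columns
then say that `(a, e, c)` is a left-kernel vector of `[[J_E], [P_A J_I], [J_α]]`, and every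
left-kernel vector of that matrix arises this way.
-/

lemma Sum.forall_elim {α β γ : Type*} {q : (α ⊕ β → γ) → Prop} :
    (∀ v, q v) ↔ ∀ a b, q (Sum.elim a b) :=
  ⟨fun h _ _ => h _, fun h v => Sum.elim_comp_inl_inr v ▸ h _ _⟩

lemma Sum.elim_eq_zero_iff {α β γ : Type*} [Zero γ] {a : α → γ} {b : β → γ} :
    Sum.elim a b = 0 ↔ a = 0 ∧ b = 0 := by
  rw [← Sum.elim_zero_zero, Sum.elim_eq_iff]

lemma Matrix.rank_eq_card_iff_forall_vecMul_eq_zero {m n K : Type*} [Fintype m] [Fintype n]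
    [Field K] (A : Matrix m n K) : A.rank = Fintype.card m ↔ ∀ v, v ᵥ* A = 0 → v = 0 := by
  have hrow : LinearIndependent K A.row ↔ A.rank = Fintype.card m := by
    rw [linearIndependent_iff_card_eq_finrank_span, rank_eq_finrank_span_row, eq_comm]
    rfl
  rw [← hrow, ← vecMul_injective_iff, ← coe_vecMulLinear, injective_iff_map_eq_zero]
  rfl

section Selection

variable {k : ℕ} (P : Fin k → Prop) [DecidablePred P]

lemma vecMul_sel_apply (d : {j // P j} → ℝ) (j : Fin k) :
    (d ᵥ* sel P) j = if h : P j then d ⟨j, h⟩ else 0 := by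
  simp only [sel, vecMul, dotProduct, of_apply, mul_ite, mul_one, mul_zero]
  split_ifs with h
  · rw [Fintype.sum_eq_single ⟨j, h⟩ fun i hi => if_neg fun hij => hi (Subtype.ext hij),
      if_pos rfl]
  · exact Finset.sum_eq_zero fun i _ => if_neg fun (hi : (i : Fin k) = j) => h (hi ▸ i.2)

lemma vecMul_sel_apply_coe (d : {j // P j} → ℝ) (i : {j // P j}) : (d ᵥ* sel P) i = d i := by
  rw [vecMul_sel_apply, dif_pos i.2]

lemma vecMul_sel_injective : Function.Injective fun d : {j // P j} → ℝ => d ᵥ* sel P :=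
  fun d d' h => funext fun i => by simpa only [vecMul_sel_apply_coe] using congrFun h i

lemma restrict_vecMul_sel {b : Fin k → ℝ} (hb : ∀ j, ¬P j → b j = 0) :
    (fun i : {j // P j} => b i) ᵥ* sel P = b :=
  funext fun j => by
    rw [vecMul_sel_apply]
    split_ifs with h
    · rfl
    · exact (hb j h).symm

lemma vecMul_sel_eq_vecMul_diagonal_iff {s : Fin k → ℝ} (hs : ∀ j, s j = 0 ↔ P j)
    (d : {j // P j} → ℝ) (b : Fin k → ℝ) :
    d ᵥ* sel P = b ᵥ* diagonal s ↔ d = 0 ∧ ∀ j, ¬P j → b j = 0 := by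
  simp only [funext_iff, vecMul_sel_apply, vecMul_diagonal, Pi.zero_apply]
  constructor
  · intro h
    refine ⟨fun i => ?_, fun j hj => ?_⟩
    · simpa [i.2, (hs i).2 i.2] using h i
    · simpa [hj, (hs j).not.2 hj] using (h j).symm
  · rintro ⟨hd, hb⟩ j
    by_cases hj : P j
    · simp [hj, hd, (hs j).2 hj]
    · simp [hj, hb j hj]

end Selection

section Jacobians

variable {m₁ p n : Type*} [Fintype m₁] [Fintype p] {k : ℕ}
  (JE : Matrix m₁ n ℝ) (JI : Matrix (Fin k) n ℝ) (Jα : Matrix p n ℝ)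
  (P : Fin k → Prop) [DecidablePred P]

def slackJacobian (s : Fin k → ℝ) :
    Matrix (m₁ ⊕ (Fin k ⊕ (p ⊕ {j // P j}))) (n ⊕ Fin k) ℝ :=
  fromRows (fromCols JE 0)
    (fromRows (fromCols JI (-diagonal s)) (fromRows (fromCols Jα 0) (fromCols 0 (sel P))))

def activeJacobian : Matrix (m₁ ⊕ ({j // P j} ⊕ p)) n ℝ :=
  fromRows JE (fromRows (sel P * JI) Jα)

lemma sumElim_vecMul_slackJacobian (s : Fin k → ℝ) (a : m₁ → ℝ) (b : Fin k → ℝ)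
    (c : p → ℝ) (d : {j // P j} → ℝ) :
    Sum.elim a (Sum.elim b (Sum.elim c d)) ᵥ* slackJacobian JE JI Jα P s
      = Sum.elim (a ᵥ* JE + b ᵥ* JI + c ᵥ* Jα) (d ᵥ* sel P - b ᵥ* diagonal s) := by
  simp only [slackJacobian, sumElim_vecMul_fromRows, vecMul_fromCols, vecMul_zero, vecMul_neg,
    ← Sum.elim_add_add]
  congr 1 <;> abel

lemma sumElim_vecMul_activeJacobian (a : m₁ → ℝ) (e : {j // P j} → ℝ) (c : p → ℝ) :
    Sum.elim a (Sum.elim e c) ᵥ* activeJacobian JE JI Jα P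
      = a ᵥ* JE + (e ᵥ* sel P) ᵥ* JI + c ᵥ* Jα := by
  simp only [activeJacobian, sumElim_vecMul_fromRows, vecMul_vecMul, add_assoc]

theorem rank_slackJacobian_eq_card_iff [Fintype n] {s : Fin k → ℝ}
    (hs : ∀ j, s j = 0 ↔ P j) :
    (slackJacobian JE JI Jα P s).rank = Fintype.card (m₁ ⊕ (Fin k ⊕ (p ⊕ {j // P j})))
      ↔ (activeJacobian JE JI Jα P).rank = Fintype.card (m₁ ⊕ ({j // P j} ⊕ p)) := by
  simp only [rank_eq_card_iff_forall_vecMul_eq_zero, Sum.forall_elim,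
    sumElim_vecMul_slackJacobian, sumElim_vecMul_activeJacobian, Sum.elim_eq_zero_iff,
    sub_eq_zero, vecMul_sel_eq_vecMul_diagonal_iff P hs]
  constructor
  · rintro H a e c he
    obtain ⟨rfl, he0, rfl, -⟩ := H a (e ᵥ* sel P) c 0
      ⟨he, rfl, fun j hj => by rw [vecMul_sel_apply, dif_neg hj]⟩
    exact ⟨rfl, vecMul_sel_injective P (he0.trans (zero_vecMul _).symm), rfl⟩
  · rintro H a b c d ⟨hb, rfl, hbP⟩
    obtain ⟨rfl, hb0, rfl⟩ := H a (fun i => b i) c (by rwa [restrict_vecMul_sel P hbP])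
    refine ⟨rfl, ?_, rfl, rfl⟩
    rw [← restrict_vecMul_sel P hbP, hb0, zero_vecMul]

end Jacobians

/-- LIKQ for the abs-normal NLP with inequalities is equivalent to LIKQ for its slack
reformulation, at the level of Jacobians: the big slack Jacobian
`[[J_E, 0], [J_I, −Σ^w], [J_α, 0], [0, P_A]]` has full row rank iff
`[[J_E], [P_A J_I], [J_α]]` has full row rank, where `A = {i : wᵢ = 0}` and
`Σ^w = diag(sign w)`. -/
theorem stmt3 {m₁ m₂ p n : ℕ}
    (JE : Matrix (Fin m₁) (Fin n) ℝ) (JI : Matrix (Fin m₂) (Fin n) ℝ)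
    (Jα : Matrix (Fin p) (Fin n) ℝ) (w : Fin m₂ → ℝ) :
    (Matrix.fromRows (Matrix.fromCols JE (0 : Matrix (Fin m₁) (Fin m₂) ℝ))
      (Matrix.fromRows
        (Matrix.fromCols JI (-(Matrix.diagonal fun i => Real.sign (w i))))
        (Matrix.fromRows (Matrix.fromCols Jα (0 : Matrix (Fin p) (Fin m₂) ℝ))
          (Matrix.fromCols (0 : Matrix {i // w i = 0} (Fin n) ℝ)
            (sel fun i => w i = 0))))).rank
      = m₁ + m₂ + p + Fintype.card {i // w i = 0}
    ↔ (Matrix.fromRows JE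
        (Matrix.fromRows (sel (fun i => w i = 0) * JI) Jα)).rank
      = m₁ + Fintype.card {i // w i = 0} + p := by
  have h := rank_slackJacobian_eq_card_iff JE JI Jα (fun i => w i = 0)
    (s := fun i => Real.sign (w i)) fun _ => Real.sign_eq_zero_iff
  simp only [Fintype.card_sum, Fintype.card_fin, ← add_assoc] at h
  exact h

end
end

section
/- Let B ∈ ℝ^{p×n}, A ∈ ℝ^{a×n}, C ∈ ℝ^{q×n} be real matrices such that the stacked matrix [[B],[A],[C]] ∈ ℝ^{(p+a+q)×n} has full row rank. Then the stacked matrix [[B],[C]] ∈ ℝ^{(p+q)×n} has full row rank and there exists a vector d ∈ ℝ^n with Bd = 0, Cd = 0, and Ad > 0 componentwise. (With B the equality Jacobian, A the active-inequality Jacobian, and C the active switching Jacobian, this says that LIKQ implies IDKQ for an abs-normal NLP.) -/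
/-!
Full row rank of `[[B],[A],[C]]` means that `d ↦ (B d, A d, C d)` is onto, so the three
right-hand sides can be prescribed independently: dropping the `A` block keeps surjectivity,
and solving for `(0, 1, 0)` gives the direction `d`.
-/

open Matrix

namespace Matrix

variable {m m₁ m₂ n K : Type*} [Fintype n]

theorem rank_eq_card_iff_surjective_mulVec [Fintype m] [Field K] (M : Matrix m n K) :
    M.rank = Fintype.card m ↔ Function.Surjective M.mulVec := by
  rw [rank, ← Module.finrank_fintype_fun_eq_card K, ← Submodule.eq_top_iff_finrank_eq,
    LinearMap.range_eq_top]
  rfl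

theorem surjective_fromRows_mulVec_iff [Semiring K] (B : Matrix m₁ n K) (C : Matrix m₂ n K) :
    Function.Surjective (fromRows B C).mulVec ↔ ∀ x y, ∃ d, B *ᵥ d = x ∧ C *ᵥ d = y := by
  simp only [Function.Surjective, fromRows_mulVec]
  constructor
  · intro h x y
    obtain ⟨d, hd⟩ := h (Sum.elim x y)
    exact ⟨d, Sum.elim_eq_iff.mp hd⟩
  · intro h v
    obtain ⟨d, hx, hy⟩ := h (v ∘ Sum.inl) (v ∘ Sum.inr)
    exact ⟨d, by rw [hx, hy, Sum.elim_comp_inl_inr]⟩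

end Matrix

/-- LIKQ implies IDKQ: if the stacked matrix `[[B],[A],[C]]` has full row rank,
then `[[B],[C]]` has full row rank and there is a direction `d` with
`Bd = 0`, `Cd = 0` and `Ad > 0` componentwise. -/
theorem stmt4 {p a q n : ℕ}
    (B : Matrix (Fin p) (Fin n) ℝ) (A : Matrix (Fin a) (Fin n) ℝ)
    (C : Matrix (Fin q) (Fin n) ℝ)
    (h : (Matrix.fromRows B (Matrix.fromRows A C)).rank = p + a + q) :
    (Matrix.fromRows B C).rank = p + q ∧
      ∃ d : Fin n → ℝ, B *ᵥ d = 0 ∧ C *ᵥ d = 0 ∧ ∀ i, 0 < (A *ᵥ d) i := by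
  have hsurj := (rank_eq_card_iff_surjective_mulVec _).mp (h.trans (by simp only [Fintype.card_sum, Fintype.card_fin]; omega))
  have hsolve : ∀ u v w, ∃ d, B *ᵥ d = u ∧ A *ᵥ d = v ∧ C *ᵥ d = w := by
    intro u v w
    obtain ⟨d, hu, hvw⟩ := (surjective_fromRows_mulVec_iff _ _).mp hsurj u (Sum.elim v w)
    rw [fromRows_mulVec] at hvw
    obtain ⟨hv, hw⟩ := Sum.elim_eq_iff.mp hvw
    exact ⟨d, hu, hv, hw⟩
  refine ⟨?_, ?_⟩
  · refine ((rank_eq_card_iff_surjective_mulVec _).mpr ?_).trans (by simp)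
    refine (surjective_fromRows_mulVec_iff _ _).mpr fun u w => ?_
    obtain ⟨d, hu, -, hw⟩ := hsolve u 0 w
    exact ⟨d, hu, hw⟩
  · obtain ⟨d, hB, hA, hC⟩ := hsolve 0 1 0
    exact ⟨d, hB, hC, fun i => by simp [hA]⟩
end

section
/- Let B = [1, 1, 0] ∈ ℝ^{1×3}, A = [[4, 0, −1], [0, 4, −1]] ∈ ℝ^{2×3}, and C = [1, −1, 0] ∈ ℝ^{1×3}. Then the stacked matrix [[B],[A],[C]] ∈ ℝ^{4×3} does not have full row rank, while [[B],[C]] has full row rank and the vector d = (0, 0, −1) satisfies Bd = 0, Cd = 0, and Ad > 0 componentwise. (This witnesses that IDKQ is strictly weaker than LIKQ for abs-normal NLPs with inequality constraints.) -/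
open Matrix

namespace Matrix

variable {m n R : Type*} [Fintype m] [Fintype n]

theorem rank_ne_card_height_of_card_width_lt [CommSemiring R] [StrongRankCondition R]
    (A : Matrix m n R) (h : Fintype.card n < Fintype.card m) : A.rank ≠ Fintype.card m :=
  (A.rank_le_card_width.trans_lt h).ne

theorem rank_eq_card_height_of_isUnit_mul_transpose [DecidableEq m] [CommRing R]
    [StrongRankCondition R] (A : Matrix m n R) (h : IsUnit (A * Aᵀ)) :
    A.rank = Fintype.card m :=
  le_antisymm A.rank_le_card_height ((rank_of_isUnit _ h).symm.le.trans (A.rank_mul_le_left Aᵀ))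

end Matrix

theorem fromRows_B_C_mul_transpose :
    let M := fromRows !![(1:ℝ), 1, 0] !![(1:ℝ), -1, 0]
    M * Mᵀ = (2:ℝ) • 1 := by
  intro M
  ext (i | i) (j | j) <;> fin_cases i <;> fin_cases j <;>
    simp [M, mul_apply, Fin.sum_univ_succ] <;> norm_num

/-- Example showing that IDKQ is strictly weaker than LIKQ: with
`B = [1,1,0]`, `A = [[4,0,−1],[0,4,−1]]`, `C = [1,−1,0]`, the stacked matrix
`[[B],[A],[C]]` does not have full row rank, while `[[B],[C]]` has full row rank
and `d = (0,0,−1)` satisfies `Bd = 0`, `Cd = 0`, `Ad > 0`. -/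
theorem stmt5 :
    (Matrix.fromRows (!![(1:ℝ), 1, 0])
      (Matrix.fromRows (!![(4:ℝ), 0, -1; 0, 4, -1]) (!![(1:ℝ), -1, 0]))).rank ≠ 4 ∧
    (Matrix.fromRows (!![(1:ℝ), 1, 0]) (!![(1:ℝ), -1, 0])).rank = 2 ∧
    (!![(1:ℝ), 1, 0]) *ᵥ ![0, 0, -1] = 0 ∧
    (!![(1:ℝ), -1, 0]) *ᵥ ![0, 0, -1] = 0 ∧
    (∀ i, 0 < ((!![(4:ℝ), 0, -1; 0, 4, -1]) *ᵥ ![0, 0, -1]) i) := by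
  have hGram : IsUnit ((2:ℝ) • (1 : Matrix (Fin 1 ⊕ Fin 1) (Fin 1 ⊕ Fin 1) ℝ)) := by
    simp [isUnit_iff_isUnit_det]
  refine ⟨?_, ?_, ?_, ?_, ?_⟩
  · exact rank_ne_card_height_of_card_width_lt _ (by simp)
  · exact rank_eq_card_height_of_isUnit_mul_transpose _ (fromRows_B_C_mul_transpose ▸ hGram)
  · ext i; fin_cases i; simp
  · ext i; fin_cases i; simp
  · intro i; fin_cases i <;> simp
end

section
/- Let f' ∈ ℝ^n, E₁ ∈ ℝ^{m₁×n}, E₂ ∈ ℝ^{m₁×s}, I₁ ∈ ℝ^{m₂×n}, I₂ ∈ ℝ^{m₂×s}, Z₁ ∈ ℝ^{s×n}, Z₂ ∈ ℝ^{s×s}, c ∈ ℝ^{m₂}, and σ ∈ {−1,0,1}^s; set U₊ = {i : σᵢ = 1}, V₊ = {i : σᵢ = −1}, D = {i : σᵢ = 0}. Fix multipliers λ_E ∈ ℝ^{m₁}, λ_I ∈ ℝ^{m₂}, λ_Z ∈ ℝ^s and write g = E₂ᵀλ_E − I₂ᵀλ_I + Z₂ᵀλ_Z ∈ ℝ^s.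 Then the following are equivalent: (i) [kink stationarity] f' + E₁ᵀλ_E − I₁ᵀλ_I + Z₁ᵀλ_Z = 0; gᵢ ≥ |(λ_Z)ᵢ| for all i ∈ D; gᵢ = σᵢ(λ_Z)ᵢ for all i ∉ D; λ_I ≥ 0; λ_Iᵀc = 0. (ii) [S-stationarity] there exist μᵘ, μᵛ ∈ ℝ^s with f' + E₁ᵀλ_E − I₁ᵀλ_I + Z₁ᵀλ_Z = 0; g − λ_Z − μᵘ = 0; g + λ_Z − μᵛ = 0; μᵘᵢ ≥ 0 and μᵛᵢ ≥ 0 for all i ∈ D; μᵘᵢ = 0 for all i ∈ U₊; μᵛᵢ = 0 for all i ∈ V₊; λ_I ≥ 0; λ_Iᵀc = 0. (With the matrices taken as the partial derivatives of cE, cI, cZ at a feasible point, f' the gradient of the objective, c the vector of inequality values, and σ the signature of the switching variables, this says that a point is kink stationary for the abs-normal NLP if and only if the corresponding point is strongly stationary for the counterpart MPCC.) -/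
/-!
The two equations of (ii) force `μᵘ = g - λ_Z` and `μᵛ = g + λ_Z`, after which the equivalence
is coordinatewise: where `σᵢ = 0` the sign conditions on `μᵘᵢ, μᵛᵢ` say `|λ_Z i| ≤ gᵢ`, and where
`σᵢ = ±1` the vanishing of `μᵘᵢ` resp. `μᵛᵢ` says `gᵢ = σᵢ λ_Z i`.
-/

open Matrix

lemma kink_coord_iff_sStationary_coord {σ g z : ℝ} (hσ : σ = -1 ∨ σ = 0 ∨ σ = 1) :
    ((σ = 0 → |z| ≤ g) ∧ (σ ≠ 0 → g = σ * z)) ↔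
      ((σ = 0 → 0 ≤ g - z ∧ 0 ≤ g + z) ∧ (σ = 1 → g - z = 0) ∧ (σ = -1 → g + z = 0)) := by
  rcases hσ with rfl | rfl | rfl
  · norm_num [add_eq_zero_iff_eq_neg]
  · norm_num [abs_le, neg_le_iff_add_nonneg', and_comm]
  · norm_num [sub_eq_zero]

/-- Kink stationarity for the abs-normal NLP is equivalent to S-stationarity for the
counterpart MPCC, for fixed multipliers `(λ_E, λ_I, λ_Z)`. Here `σ` is the signature
(`σᵢ = 1` on `U₊`, `σᵢ = −1` on `V₊`, `σᵢ = 0` on `D`) and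
`g = E₂ᵀλ_E − I₂ᵀλ_I + Z₂ᵀλ_Z`. -/
theorem stmt9 {n s m₁ m₂ : ℕ}
    (f' : Fin n → ℝ)
    (E₁ : Matrix (Fin m₁) (Fin n) ℝ) (E₂ : Matrix (Fin m₁) (Fin s) ℝ)
    (I₁ : Matrix (Fin m₂) (Fin n) ℝ) (I₂ : Matrix (Fin m₂) (Fin s) ℝ)
    (Z₁ : Matrix (Fin s) (Fin n) ℝ) (Z₂ : Matrix (Fin s) (Fin s) ℝ)
    (c : Fin m₂ → ℝ)
    (σ : Fin s → ℝ) (hσ : ∀ i, σ i = -1 ∨ σ i = 0 ∨ σ i = 1)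
    (lE : Fin m₁ → ℝ) (lI : Fin m₂ → ℝ) (lZ : Fin s → ℝ) :
    -- (i) kink stationarity
    (f' + E₁ᵀ *ᵥ lE - I₁ᵀ *ᵥ lI + Z₁ᵀ *ᵥ lZ = 0 ∧
      (∀ i, σ i = 0 → |lZ i| ≤ (E₂ᵀ *ᵥ lE - I₂ᵀ *ᵥ lI + Z₂ᵀ *ᵥ lZ) i) ∧
      (∀ i, σ i ≠ 0 → (E₂ᵀ *ᵥ lE - I₂ᵀ *ᵥ lI + Z₂ᵀ *ᵥ lZ) i = σ i * lZ i) ∧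
      (∀ j, 0 ≤ lI j) ∧ lI ⬝ᵥ c = 0)
    ↔
    -- (ii) S-stationarity
    (∃ μu μv : Fin s → ℝ,
      f' + E₁ᵀ *ᵥ lE - I₁ᵀ *ᵥ lI + Z₁ᵀ *ᵥ lZ = 0 ∧
      (E₂ᵀ *ᵥ lE - I₂ᵀ *ᵥ lI + Z₂ᵀ *ᵥ lZ) - lZ - μu = 0 ∧
      (E₂ᵀ *ᵥ lE - I₂ᵀ *ᵥ lI + Z₂ᵀ *ᵥ lZ) + lZ - μv = 0 ∧
      (∀ i, σ i = 0 → 0 ≤ μu i ∧ 0 ≤ μv i) ∧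
      (∀ i, σ i = 1 → μu i = 0) ∧
      (∀ i, σ i = -1 → μv i = 0) ∧
      (∀ j, 0 ≤ lI j) ∧ lI ⬝ᵥ c = 0) := by
  set g := E₂ᵀ *ᵥ lE - I₂ᵀ *ᵥ lI + Z₂ᵀ *ᵥ lZ
  simp only [sub_eq_zero (b := (_ : Fin s → ℝ)), exists_and_left, exists_eq_left']
  have coordwise :
      ((∀ i, σ i = 0 → |lZ i| ≤ g i) ∧ (∀ i, σ i ≠ 0 → g i = σ i * lZ i)) ↔
        ((∀ i, σ i = 0 → 0 ≤ g i - lZ i ∧ 0 ≤ g i + lZ i) ∧ (∀ i, σ i = 1 → g i - lZ i = 0) ∧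
          (∀ i, σ i = -1 → g i + lZ i = 0)) := by
    simp only [← forall_and]
    exact forall_congr' fun i => kink_coord_iff_sStationary_coord (hσ i)
  simp only [Pi.sub_apply, Pi.add_apply]
  refine and_congr_right' ?_
  rw [← and_assoc, coordwise, and_assoc, and_assoc]
end

section
/- Let D^t ⊆ ℝ^n be open and D^z ⊆ ℝ^s be open and symmetric under componentwise sign changes. Let f : D^t → ℝ and cE : D^t × D^z → ℝ^{m₁}, cI : D^t × D^z → ℝ^{m₂}, cZ : D^t × D^z → ℝ^s be continuously differentiable, and assume the partial Jacobian ∂₂cZ(t,r) with respect to the second argument is strictly lower triangular for all (t,r) ∈ D^t × D^z. Let (t*, z*) ∈ D^t × D^z satisfy cE(t*,|z*|) = 0, cI(t*,|z*|) ≥ 0, cZ(t*,|z*|) = z*, and suppose (t*, z*) is a local minimizer of (t,z) ↦ f(t) over the feasible set F = {(t,z) ∈ D^t × D^z : cE(t,|z|) = 0, cI(t,|z|) ≥ 0, cZ(t,|z|) = z}. Let σ = sign(z*), Σ = diag(σ), α = {i : z*ᵢ = 0}, A = {i : cIᵢ(t*,|z*|) = 0}, and W = (I − ∂₂cZ*Σ)⁻¹∂₁cZ*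 ∈ ℝ^{s×n}, where a star denotes evaluation at (t*,|z*|). Assume LIKQ: the matrix [[∂₁cE* + ∂₂cE*ΣW], [P_A(∂₁cI* + ∂₂cI*ΣW)], [P_α W]] has full row rank m₁ + |A| + |α|. Then there exist multipliers λ_E ∈ ℝ^{m₁}, λ_I ∈ ℝ^{m₂}, λ_Z ∈ ℝ^s such that ∇f(t*) + (∂₁cE*)ᵀλ_E − (∂₁cI*)ᵀλ_I + (∂₁cZ*)ᵀλ_Z = 0; ((∂₂cE*)ᵀλ_E − (∂₂cI*)ᵀλ_I + (∂₂cZ*)ᵀλ_Z)ᵢ ≥ |(λ_Z)ᵢ| for all i ∈ α; ((∂₂cE*)ᵀλ_E − (∂₂cI*)ᵀλ_I + (∂₂cZ*)ᵀλ_Z)ᵢ = σᵢ(λ_Z)ᵢ for all i ∉ α; λ_I ≥ 0; and λ_Iᵀ cI(t*,|z*|) = 0. -/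
/-!
Writing `|z| = diag τ z` on the branch where `sign z = τ` turns the abs-normal problem, near
`(t*, z*)`, into finitely many smooth branch problems, one for each `τ` that agrees with
`σ = sign z*` off `α`. Their constraint maps (equalities, active inequalities, and the kink
coordinates `z_α`) have derivatives that differ only through `z_α`, so LIKQ makes all of them
onto. By the Lyusternik curve theorem, every ray of a linearized branch feasible set is tangent
to a feasible curve, hence `f'` is nonnegative along it. On the kernel of the `σ`-derivative
this gives `f' = ξ ∘ A_σ`, i.e. the multipliers; the rays `e_j` of the active inequalities give
`λ_I ≥ 0`, and the rays `z_i = ±t` on the two branches through a zero kink `i` give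
`|λ_Z,i| ≤ (∂₂cEᵀλ_E − ∂₂cIᵀλ_I + ∂₂cZᵀλ_Z)_i`.
-/

open Matrix
open scoped Classical

noncomputable section

/-- Partial Jacobian with respect to the first argument. -/
def jac1 {n s m : ℕ} (c : (Fin n → ℝ) × (Fin s → ℝ) → Fin m → ℝ)
    (p : (Fin n → ℝ) × (Fin s → ℝ)) : Matrix (Fin m) (Fin n) ℝ :=
  Matrix.of fun i j => fderiv ℝ c p (Pi.single j 1, 0) i

/-- Partial Jacobian with respect to the second argument. -/
def jac2 {n s m : ℕ} (c : (Fin n → ℝ) × (Fin s → ℝ) → Fin m → ℝ)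
    (p : (Fin n → ℝ) × (Fin s → ℝ)) : Matrix (Fin m) (Fin s) ℝ :=
  Matrix.of fun i j => fderiv ℝ c p (0, Pi.single j 1) i

open Filter Topology Set

section Lyusternik

variable {E F : Type*} [NormedAddCommGroup E] [NormedSpace ℝ E] [CompleteSpace E]
  [NormedAddCommGroup F] [NormedSpace ℝ F]

theorem HasStrictFDerivAt.exists_curve_of_equiv {H : E → F} {L : E ≃L[ℝ] F} {x₀ : E}
    (hH : HasStrictFDerivAt H (L : E →L[ℝ] F) x₀) (v : E) :
    ∃ γ : ℝ → E, γ 0 = x₀ ∧ HasDerivAt γ v 0 ∧ ∀ᶠ t in 𝓝 0, H (γ t) = H x₀ + t • L v := by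
  set c : ℝ → F := fun t => H x₀ + t • L v
  have hc : HasDerivAt c (L v) 0 :=
    (((hasDerivAt_id (0 : ℝ)).smul_const (L v)).const_add (H x₀)).congr_deriv (one_smul ℝ _)
  have hc0 : c 0 = H x₀ := by simp [c]
  refine ⟨hH.localInverse H L x₀ ∘ c, by simp [hc0], ?_, ?_⟩
  · have h := (hc0 ▸ hH.to_localInverse.hasFDerivAt).comp_hasDerivAt 0 hc
    rwa [ContinuousLinearEquiv.coe_coe, L.symm_apply_apply] at h
  · exact (hc0 ▸ hc.continuousAt.tendsto).eventually hH.eventually_right_inverse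

variable [FiniteDimensional ℝ F]

theorem HasStrictFDerivAt.exists_curve_of_surjective {Φ : E → F} {A : E →L[ℝ] F} {x₀ : E}
    (hΦ : HasStrictFDerivAt Φ A x₀) (hA : Function.Surjective A) (v : E) :
    ∃ γ : ℝ → E, γ 0 = x₀ ∧ HasDerivAt γ v 0 ∧ ∀ᶠ t in 𝓝 0, Φ (γ t) = Φ x₀ + t • A v := by
  -- completing `Φ` by a projection onto `ker A` gives a map with invertible derivative
  let φ := HasStrictFDerivAt.implicitFunctionDataOfComplemented Φ A hΦ
    (LinearMap.range_eq_top.mpr hA) A.ker_closedComplemented_of_finiteDimensional_range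
  obtain ⟨γ, hγ0, hγ, hH⟩ := φ.hasStrictFDerivAt.exists_curve_of_equiv v
  exact ⟨γ, hγ0, hγ, hH.mono fun t ht => congrArg Prod.fst ht⟩

theorem IsLocalMinOn.hasFDerivAt_nonneg_of_ray {f : E → ℝ} {f' : E →L[ℝ] ℝ} {S : Set E}
    {Φ : E → F} {A : E →L[ℝ] F} {x₀ v : E}
    (hmin : IsLocalMinOn f S x₀) (hf : HasFDerivAt f f' x₀) (hΦ : HasStrictFDerivAt Φ A x₀)
    (hA : Function.Surjective A)
    (hS : ∀ᶠ x in 𝓝 x₀, (∃ c : ℝ, 0 ≤ c ∧ Φ x = Φ x₀ + c • A v) → x ∈ S) :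
    0 ≤ f' v := by
  obtain ⟨γ, hγ0, hγ, hΦγ⟩ := hΦ.exists_curve_of_surjective hA v
  have hγx₀ : Tendsto γ (𝓝 0) (𝓝 x₀) := hγ0 ▸ hγ.continuousAt.tendsto
  have hminγ : IsLocalMinOn (f ∘ γ) (Ici 0) 0 := by
    rw [IsLocalMinOn, IsMinFilter, eventually_nhdsWithin_iff]
    filter_upwards [hγx₀.eventually (eventually_nhdsWithin_iff.mp hmin), hγx₀.eventually hS,
      hΦγ] with t hft hSt hΦt ht
    simpa [hγ0] using hft (hSt ⟨t, ht, hΦt⟩)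
  have hfγ : HasDerivWithinAt (f ∘ γ) (f' v) (Ici 0) 0 :=
    ((hγ0 ▸ hf).comp_hasDerivAt 0 hγ).hasDerivWithinAt
  simpa using hminγ.hasFDerivWithinAt_nonneg hfγ.hasFDerivWithinAt
    (mem_posTangentConeAt_of_segment_subset (y := 1)
      (by simpa [segment_eq_Icc] using Icc_subset_Ici_self))

end Lyusternik

section LinearAlgebra

theorem LinearMap.exists_eq_comp_of_surjective {R E F : Type*} [CommRing R] [AddCommGroup E]
    [Module R E] [AddCommGroup F] [Module R F] {A : E →ₗ[R] F} (hA : Function.Surjective A)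
    {φ : E →ₗ[R] R} (hφ : ∀ v, A v = 0 → φ v = 0) : ∃ ξ : F →ₗ[R] R, ∀ x, φ x = ξ (A x) := by
  refine ⟨(LinearMap.ker A).liftQ φ (fun v hv => hφ v hv) ∘ₗ
    (A.quotKerEquivOfSurjective hA).symm.toLinearMap, fun x => ?_⟩
  have hx : (A.quotKerEquivOfSurjective hA).symm (A x) = Submodule.Quotient.mk x := by
    rw [LinearEquiv.symm_apply_eq]; rfl
  simp only [LinearMap.comp_apply, LinearEquiv.coe_coe, hx]
  exact ((LinearMap.ker A).liftQ_apply φ x).symm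

theorem LinearMap.exists_eq_dotProduct {R ι : Type*} [CommSemiring R] [Fintype ι]
    [DecidableEq ι] (ψ : (ι → R) →ₗ[R] R) : ∃ a : ι → R, ∀ y, ψ y = a ⬝ᵥ y :=
  ⟨(dotProductEquiv R ι).symm ψ, fun y => by
    rw [← LinearMap.congr_fun ((dotProductEquiv R ι).apply_symm_apply ψ) y]; rfl⟩

theorem LinearMap.exists_eq_dotProduct_add {R ι G : Type*} [CommSemiring R] [Fintype ι]
    [DecidableEq ι] [AddCommMonoid G] [Module R G] (ξ : (ι → R) × G →ₗ[R] R) :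
    ∃ (a : ι → R) (ξ' : G →ₗ[R] R), ∀ y g, ξ (y, g) = a ⬝ᵥ y + ξ' g := by
  obtain ⟨a, ha⟩ := (ξ ∘ₗ LinearMap.inl R _ G).exists_eq_dotProduct
  refine ⟨a, ξ ∘ₗ LinearMap.inr R _ G, fun y g => ?_⟩
  rw [← ha, LinearMap.comp_apply, LinearMap.comp_apply, ← map_add]
  simp

theorem Matrix.det_one_sub_eq_one {ι R : Type*} [Fintype ι] [DecidableEq ι] [LinearOrder ι]
    [CommRing R] {N : Matrix ι ι R} (hN : ∀ i j, i ≤ j → N i j = 0) : (1 - N).det = 1 := by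
  rw [det_of_isLowerTriangular _ fun i j (hij : i < j) => by
    simp [one_apply_ne hij.ne, hN i j hij.le]]
  simp [hN _ _ le_rfl]

theorem Matrix.mulVec_surjective_of_rank_eq_card {K m ι : Type*} [Field K] [Fintype m]
    [Fintype ι] (B : Matrix m ι K) (h : B.rank = Fintype.card m) : Function.Surjective B.mulVec := by
  have hrange : LinearMap.range B.mulVecLin = ⊤ :=
    Submodule.eq_top_of_finrank_eq (by rw [Module.finrank_fintype_fun_eq_card]; exact h)
  exact LinearMap.range_eq_top.mp hrange

theorem Matrix.diagonal_update_mulVec {ι R : Type*} [Fintype ι] [DecidableEq ι] [CommRing R]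
    (σ w : ι → R) (i : ι) (ε : R) :
    diagonal (Function.update σ i ε) *ᵥ w = diagonal σ *ᵥ w + Pi.single i ((ε - σ i) * w i) := by
  ext k
  by_cases hk : k = i
  · subst hk
    simp only [mulVec_diagonal, Function.update_self, Pi.add_apply, Pi.single_eq_same]
    ring
  · simp [mulVec_diagonal, hk]

def mulVecCLM {ι κ : Type*} [Fintype κ] (M : Matrix ι κ ℝ) : (κ → ℝ) →L[ℝ] (ι → ℝ) :=
  LinearMap.toContinuousLinearMap M.mulVecLin

@[simp]
theorem mulVecCLM_apply {ι κ : Type*} [Fintype κ] (M : Matrix ι κ ℝ) (v : κ → ℝ) :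
    mulVecCLM M v = M *ᵥ v := rfl

theorem fderiv_apply_eq_jac1_mulVec_add_jac2_mulVec {n s m : ℕ}
    (c : (Fin n → ℝ) × (Fin s → ℝ) → Fin m → ℝ) (p : (Fin n → ℝ) × (Fin s → ℝ))
    (u : Fin n → ℝ) (w : Fin s → ℝ) :
    fderiv ℝ c p (u, w) = jac1 c p *ᵥ u + jac2 c p *ᵥ w := by
  have h₁ : jac1 c p = LinearMap.toMatrix' ((fderiv ℝ c p).toLinearMap ∘ₗ LinearMap.inl ℝ _ _) :=
    rfl
  have h₂ : jac2 c p = LinearMap.toMatrix' ((fderiv ℝ c p).toLinearMap ∘ₗ LinearMap.inr ℝ _ _) :=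
    rfl
  rw [h₁, h₂, LinearMap.toMatrix'_mulVec, LinearMap.toMatrix'_mulVec]
  simp [← map_add]

section Selection

variable {k : ℕ} {p : Fin k → Prop}

theorem sel_mulVec_apply (y : Fin k → ℝ) (i : {i // p i}) : (sel p *ᵥ y) i = y i := by
  simp [sel, mulVec, dotProduct]

variable [DecidablePred p]

theorem sel_transpose_mulVec_apply (μ : {i // p i} → ℝ) (j : Fin k) :
    ((sel p)ᵀ *ᵥ μ) j = if h : p j then μ ⟨j, h⟩ else 0 := by
  simp only [sel, mulVec, dotProduct, transpose_apply, of_apply, ite_mul, one_mul, zero_mul]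
  split_ifs with h
  · rw [Finset.sum_eq_single_of_mem ⟨j, h⟩ (Finset.mem_univ _)
      fun i _ hi => if_neg fun hij => hi (Subtype.ext hij), if_pos rfl]
  · exact Finset.sum_eq_zero fun i _ => if_neg fun hij : (i : Fin k) = j => h (hij ▸ i.2)

theorem sel_transpose_mulVec_sel_mulVec (w : Fin k → ℝ) {i : Fin k} (hi : p i) :
    ((sel p)ᵀ *ᵥ (sel p *ᵥ w)) i = w i := by
  rw [sel_transpose_mulVec_apply, dif_pos hi, sel_mulVec_apply]

theorem sel_transpose_mulVec_nonneg {μ : {i // p i} → ℝ} (hμ : 0 ≤ μ) : 0 ≤ (sel p)ᵀ *ᵥ μ := by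
  intro j
  rw [sel_transpose_mulVec_apply]
  split_ifs
  exacts [hμ _, le_rfl]

end Selection

theorem sel_transpose_mulVec_dotProduct_eq_zero {k : ℕ} (y : Fin k → ℝ)
    (μ : {j // y j = 0} → ℝ) : (sel fun j => y j = 0)ᵀ *ᵥ μ ⬝ᵥ y = 0 := by
  rw [mulVec_transpose, ← dotProduct_mulVec]
  convert dotProduct_zero μ
  ext j
  exact (sel_mulVec_apply _ j).trans j.2

end LinearAlgebra

section Signs

theorem Real.sign_mul_eq_abs (r : ℝ) : Real.sign r * r = |r| := by
  rcases lt_trichotomy r 0 with h | rfl | h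
  · rw [Real.sign_of_neg h, abs_of_neg h, neg_one_mul]
  · simp
  · rw [Real.sign_of_pos h, abs_of_pos h, one_mul]

variable {s : ℕ}

theorem diagonal_mulVec_eq_vabs {z τ : Fin s → ℝ} (hτ : ∀ i, z i ≠ 0 → τ i = Real.sign (z i)) :
    diagonal τ *ᵥ z = vabs z := by
  ext i
  rw [mulVec_diagonal, vabs]
  by_cases hz : z i = 0
  · simp [hz]
  · rw [hτ i hz, Real.sign_mul_eq_abs]

theorem eventually_sign_mul_eq_abs (z₀ : Fin s → ℝ) :
    ∀ᶠ z in 𝓝 z₀, ∀ i, z₀ i ≠ 0 → Real.sign (z₀ i) * z i = |z i| := by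
  refine eventually_all.2 fun i => ?_
  by_cases hi : z₀ i = 0
  · exact .of_forall fun _ h => absurd hi h
  have hc : Continuous fun z : Fin s → ℝ => Real.sign (z₀ i) * z i :=
    continuous_const.mul (continuous_apply i)
  filter_upwards [hc.continuousAt.eventually (lt_mem_nhds (Real.sign_mul_pos_of_ne_zero _ hi))]
    with z hz _
  rcases Real.sign_apply_eq_of_ne_zero _ hi with h | h <;> rw [h] at hz ⊢
  · rw [abs_of_neg (by linarith)]; ring
  · rw [abs_of_pos (by linarith)]; ring

end Signs

section BranchProblem

variable {n s m₁ m₂ : ℕ} (cE : (Fin n → ℝ) × (Fin s → ℝ) → Fin m₁ → ℝ)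
  (cI : (Fin n → ℝ) × (Fin s → ℝ) → Fin m₂ → ℝ) (cZ : (Fin n → ℝ) × (Fin s → ℝ) → Fin s → ℝ)
  (p : (Fin n → ℝ) × (Fin s → ℝ)) (act : Fin m₂ → Prop) (alph : Fin s → Prop)

/-- On the branch where `sign z = τ`, this is `(t, z) ↦ (t, |z|)`. -/
def branchScale (n : ℕ) (τ : Fin s → ℝ) :
    (Fin n → ℝ) × (Fin s → ℝ) →L[ℝ] (Fin n → ℝ) × (Fin s → ℝ) :=
  (ContinuousLinearMap.id ℝ _).prodMap (mulVecCLM (diagonal τ))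

@[simp]
theorem branchScale_apply (τ : Fin s → ℝ) (q : (Fin n → ℝ) × (Fin s → ℝ)) :
    branchScale n τ q = (q.1, diagonal τ *ᵥ q.2) := rfl

/-- Constraints of the smooth problem on the branch `τ`: the active inequalities only, completed
by the kink coordinates `z_alph`, so that LIKQ becomes surjectivity of `branchDeriv`. -/
def branchMap (τ : Fin s → ℝ) (q : (Fin n → ℝ) × (Fin s → ℝ)) :
    (Fin m₁ → ℝ) × ({j // act j} → ℝ) × (Fin s → ℝ) × ({i // alph i} → ℝ) :=
  (cE (branchScale n τ q), sel act *ᵥ cI (branchScale n τ q), cZ (branchScale n τ q) - q.2,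
    sel alph *ᵥ q.2)

def branchDeriv (τ : Fin s → ℝ) : (Fin n → ℝ) × (Fin s → ℝ) →L[ℝ]
    (Fin m₁ → ℝ) × ({j // act j} → ℝ) × (Fin s → ℝ) × ({i // alph i} → ℝ) :=
  ((fderiv ℝ cE p).comp (branchScale n τ)).prod
    (((mulVecCLM (sel act)).comp ((fderiv ℝ cI p).comp (branchScale n τ))).prod
      (((fderiv ℝ cZ p).comp (branchScale n τ) - ContinuousLinearMap.snd ℝ _ _).prod
        ((mulVecCLM (sel alph)).comp (ContinuousLinearMap.snd ℝ _ _))))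

theorem branchDeriv_apply (τ : Fin s → ℝ) (u : Fin n → ℝ) (w : Fin s → ℝ) :
    branchDeriv cE cI cZ p act alph τ (u, w) =
      (jac1 cE p *ᵥ u + jac2 cE p *ᵥ (diagonal τ *ᵥ w),
        sel act *ᵥ (jac1 cI p *ᵥ u + jac2 cI p *ᵥ (diagonal τ *ᵥ w)),
        jac1 cZ p *ᵥ u + jac2 cZ p *ᵥ (diagonal τ *ᵥ w) - w, sel alph *ᵥ w) := by
  simp [branchDeriv, fderiv_apply_eq_jac1_mulVec_add_jac2_mulVec]

variable {cE cI cZ p act alph}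

theorem hasStrictFDerivAt_branchMap {τ : Fin s → ℝ} {x₀ : (Fin n → ℝ) × (Fin s → ℝ)}
    (hx₀ : branchScale n τ x₀ = p) (hE : HasStrictFDerivAt cE (fderiv ℝ cE p) p)
    (hI : HasStrictFDerivAt cI (fderiv ℝ cI p) p) (hZ : HasStrictFDerivAt cZ (fderiv ℝ cZ p) p) :
    HasStrictFDerivAt (branchMap cE cI cZ act alph τ) (branchDeriv cE cI cZ p act alph τ) x₀ := by
  have hL := (branchScale n τ).hasStrictFDerivAt (x := x₀)
  replace hE : HasStrictFDerivAt cE (fderiv ℝ cE p) (branchScale n τ x₀) := by rwa [hx₀]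
  replace hI : HasStrictFDerivAt cI (fderiv ℝ cI p) (branchScale n τ x₀) := by rwa [hx₀]
  replace hZ : HasStrictFDerivAt cZ (fderiv ℝ cZ p) (branchScale n τ x₀) := by rwa [hx₀]
  exact (hE.comp x₀ hL).prodMk (((mulVecCLM _).hasStrictFDerivAt.comp x₀ (hI.comp x₀ hL)).prodMk
    (((hZ.comp x₀ hL).sub hasStrictFDerivAt_snd).prodMk
      ((mulVecCLM _).hasStrictFDerivAt.comp x₀ hasStrictFDerivAt_snd)))

variable [DecidablePred alph]

theorem branchDeriv_surjective_of_rank [DecidablePred act] {σ : Fin s → ℝ}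
    (hlow : ∀ i j, i ≤ j → jac2 cZ p i j = 0)
    (hLIKQ :
      (Matrix.fromRows
        (jac1 cE p + jac2 cE p * diagonal σ * ((1 - jac2 cZ p * diagonal σ)⁻¹ * jac1 cZ p))
        (Matrix.fromRows
          (sel act * (jac1 cI p + jac2 cI p * diagonal σ *
            ((1 - jac2 cZ p * diagonal σ)⁻¹ * jac1 cZ p)))
          (sel alph * ((1 - jac2 cZ p * diagonal σ)⁻¹ * jac1 cZ p)))).rank
        = m₁ + Fintype.card {j // act j} + Fintype.card {i // alph i}) :
    Function.Surjective (branchDeriv cE cI cZ p act alph σ) := by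
  set M := 1 - jac2 cZ p * diagonal σ
  have hM : M * M⁻¹ = 1 := mul_nonsing_inv _ <| by
    rw [det_one_sub_eq_one fun i j hij => by simp [mul_diagonal, hlow i j hij]]
    exact isUnit_one
  have hB := mulVec_surjective_of_rank_eq_card _ (by rw [hLIKQ]; simp [add_assoc])
  rintro ⟨a, b, c, d⟩
  set r := M⁻¹ *ᵥ c
  obtain ⟨u, hu⟩ := hB (Sum.elim (a + jac2 cE p *ᵥ (diagonal σ *ᵥ r))
    (Sum.elim (b + sel act *ᵥ (jac2 cI p *ᵥ (diagonal σ *ᵥ r))) (d + sel alph *ᵥ r)))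
  rw [fromRows_mulVec, fromRows_mulVec] at hu
  have huE := congrArg (fun v i => v (Sum.inl i)) hu
  have huI := congrArg (fun v j => v (Sum.inr (Sum.inl j))) hu
  have huα := congrArg (fun v i => v (Sum.inr (Sum.inr i))) hu
  simp only [Sum.elim_inl, Sum.elim_inr] at huE huI huα
  -- the `z`-component `w` solves `w = ∂₁cZ u + ∂₂cZ Σ w - c`
  set w := M⁻¹ *ᵥ (jac1 cZ p *ᵥ u) - r
  have hMw : w - jac2 cZ p *ᵥ (diagonal σ *ᵥ w) = jac1 cZ p *ᵥ u - c := by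
    have : M *ᵥ w = jac1 cZ p *ᵥ u - c := by
      simp [w, r, mulVec_sub, mulVec_mulVec, ← Matrix.mul_assoc, hM]
    simpa [M, sub_mulVec, mulVec_mulVec] using this
  refine ⟨(u, w), ?_⟩
  simp only [branchDeriv_apply, ← mulVec_mulVec, add_mulVec, mulVec_add, mulVec_sub, w]
    at huE huI huα hMw ⊢
  refine Prod.ext ?_ (Prod.ext ?_ (Prod.ext ?_ ?_))
  · linear_combination (norm := module) huE
  · linear_combination (norm := module) huI
  · linear_combination (norm := module) -hMw
  · linear_combination (norm := module) huα

theorem branchDeriv_surjective_of_eqOn {τ τ' : Fin s → ℝ} (hτ : ∀ i, ¬ alph i → τ i = τ' i)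
    (h : Function.Surjective (branchDeriv cE cI cZ p act alph τ')) :
    Function.Surjective (branchDeriv cE cI cZ p act alph τ) := by
  rintro ⟨a, b, c, d⟩
  -- the two derivatives differ by a term in `z_alph`, which is the last component of the image
  set δ := diagonal (τ - τ') *ᵥ ((sel alph)ᵀ *ᵥ d)
  obtain ⟨⟨u, w⟩, hx⟩ := h (a - jac2 cE p *ᵥ δ, b - sel act *ᵥ (jac2 cI p *ᵥ δ),
    c - jac2 cZ p *ᵥ δ, d)
  simp only [branchDeriv_apply, Prod.mk.injEq] at hx
  obtain ⟨hE, hI, hZ, hα⟩ := hx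
  have hδ : diagonal τ *ᵥ w = diagonal τ' *ᵥ w + δ := by
    ext i
    by_cases hi : alph i
    · simp only [δ, Pi.add_apply, mulVec_diagonal, Pi.sub_apply, ← hα,
        sel_transpose_mulVec_sel_mulVec w hi]
      ring
    · simp only [δ, Pi.add_apply, mulVec_diagonal, Pi.sub_apply, hτ i hi, sub_self, zero_mul,
        add_zero]
  refine ⟨(u, w), ?_⟩
  simp only [mulVec_add] at hI
  simp only [branchDeriv_apply, hδ, mulVec_add, hα]
  refine Prod.ext ?_ (Prod.ext ?_ (Prod.ext ?_ rfl))
  · linear_combination (norm := module) hE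
  · linear_combination (norm := module) hI
  · linear_combination (norm := module) hZ

end BranchProblem

section Feasibility

variable {n s m₁ m₂ : ℕ} {cE : (Fin n → ℝ) × (Fin s → ℝ) → Fin m₁ → ℝ}
  {cI : (Fin n → ℝ) × (Fin s → ℝ) → Fin m₂ → ℝ} {cZ : (Fin n → ℝ) × (Fin s → ℝ) → Fin s → ℝ}
  {t₀ : Fin n → ℝ} {z₀ : Fin s → ℝ}

def absNormalFeasible (Dt : Set (Fin n → ℝ)) (Dz : Set (Fin s → ℝ))
    (cE : (Fin n → ℝ) × (Fin s → ℝ) → Fin m₁ → ℝ) (cI : (Fin n → ℝ) × (Fin s → ℝ) → Fin m₂ → ℝ)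
    (cZ : (Fin n → ℝ) × (Fin s → ℝ) → Fin s → ℝ) : Set ((Fin n → ℝ) × (Fin s → ℝ)) :=
  {q | q.1 ∈ Dt ∧ q.2 ∈ Dz ∧ cE (q.1, vabs q.2) = 0 ∧ (∀ j, 0 ≤ cI (q.1, vabs q.2) j) ∧
    cZ (q.1, vabs q.2) = q.2}

/-- `f'` is nonnegative along every ray of the linearized feasible set of every branch through
the signature of `z₀`. -/
def BranchStationary (f' : (Fin n → ℝ) →L[ℝ] ℝ) (cE : (Fin n → ℝ) × (Fin s → ℝ) → Fin m₁ → ℝ)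
    (cI : (Fin n → ℝ) × (Fin s → ℝ) → Fin m₂ → ℝ) (cZ : (Fin n → ℝ) × (Fin s → ℝ) → Fin s → ℝ)
    (p : (Fin n → ℝ) × (Fin s → ℝ)) (act : Fin m₂ → Prop) (z₀ : Fin s → ℝ) : Prop :=
  ∀ τ : Fin s → ℝ, (∀ i, z₀ i ≠ 0 → τ i = Real.sign (z₀ i)) →
    ∀ eI : {j // act j} → ℝ, 0 ≤ eI → ∀ eα : {i // z₀ i = 0} → ℝ,
      (∀ i : {i // z₀ i = 0}, τ i * eα i = |eα i|) →
      ∀ v, branchDeriv cE cI cZ p act (fun i => z₀ i = 0) τ v = (0, eI, 0, eα) → 0 ≤ f' v.1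

theorem branchMap_eq_zero {τ : Fin s → ℝ} (hτ : ∀ i, z₀ i ≠ 0 → τ i = Real.sign (z₀ i))
    (hE₀ : cE (t₀, vabs z₀) = 0) (hZ₀ : cZ (t₀, vabs z₀) = z₀) :
    branchMap cE cI cZ (fun j => cI (t₀, vabs z₀) j = 0) (fun i => z₀ i = 0) τ (t₀, z₀) = 0 := by
  simp only [branchMap, branchScale_apply, diagonal_mulVec_eq_vabs hτ, hE₀, hZ₀, sub_self]
  refine Prod.ext rfl (Prod.ext (funext fun j => ?_) (Prod.ext rfl (funext fun i => ?_)))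
  · exact (sel_mulVec_apply _ j).trans j.2
  · exact (sel_mulVec_apply _ i).trans i.2

theorem eventually_mem_absNormalFeasible {Dt : Set (Fin n → ℝ)} {Dz : Set (Fin s → ℝ)}
    (hU : Dt ×ˢ Dz ∈ 𝓝 (t₀, z₀)) (hcI : ContinuousAt cI (t₀, vabs z₀))
    (hI₀ : ∀ j, 0 ≤ cI (t₀, vabs z₀) j) {τ : Fin s → ℝ}
    (hτ : ∀ i, z₀ i ≠ 0 → τ i = Real.sign (z₀ i)) {eI : {j // cI (t₀, vabs z₀) j = 0} → ℝ}
    (heI : 0 ≤ eI) {eα : {i // z₀ i = 0} → ℝ} (heα : ∀ i : {i // z₀ i = 0}, τ i * eα i = |eα i|) :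
    ∀ᶠ q in 𝓝 (t₀, z₀), (∃ c : ℝ, 0 ≤ c ∧
      branchMap cE cI cZ (fun j => cI (t₀, vabs z₀) j = 0) (fun i => z₀ i = 0) τ q =
        c • (0, eI, 0, eα)) → q ∈ absNormalFeasible Dt Dz cE cI cZ := by
  have hvabs : Continuous fun q : (Fin n → ℝ) × (Fin s → ℝ) => (q.1, vabs q.2) :=
    continuous_fst.prodMk (continuous_pi fun i => ((continuous_apply i).comp continuous_snd).abs)
  have hcont : ContinuousAt (fun q : (Fin n → ℝ) × (Fin s → ℝ) => cI (q.1, vabs q.2)) (t₀, z₀) :=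
    ContinuousAt.comp (f := fun q : (Fin n → ℝ) × (Fin s → ℝ) => (q.1, vabs q.2)) hcI
      hvabs.continuousAt
  have hinactive : ∀ᶠ q in 𝓝 (t₀, z₀), ∀ j, cI (t₀, vabs z₀) j ≠ 0 →
      0 < cI (q.1, vabs q.2) j := by
    refine eventually_all.2 fun j => ?_
    by_cases hj : cI (t₀, vabs z₀) j = 0
    · exact .of_forall fun _ h => absurd hj h
    exact (((continuous_apply j).continuousAt.comp hcont).eventually
      (lt_mem_nhds ((hI₀ j).lt_of_ne (Ne.symm hj)))).mono fun _ h _ => h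
  filter_upwards [hU, continuousAt_snd.eventually (eventually_sign_mul_eq_abs z₀), hinactive]
    with q hqU hsign hpos
  rintro ⟨c, hc, hq⟩
  simp only [branchMap, branchScale_apply, Prod.smul_mk, smul_zero, Prod.mk.injEq] at hq
  obtain ⟨hE, hI, hZ, hα⟩ := hq
  have habs : diagonal τ *ᵥ q.2 = vabs q.2 := by
    ext i
    rw [mulVec_diagonal, vabs]
    by_cases hi : z₀ i = 0
    · have hqi : q.2 i = c * eα ⟨i, hi⟩ := by
        simpa [sel_mulVec_apply] using congrFun hα ⟨i, hi⟩
      rw [hqi, abs_mul, abs_of_nonneg hc, ← heα]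
      ring
    · rw [hτ i hi, hsign i hi]
  rw [habs] at hE hI hZ
  refine ⟨hqU.1, hqU.2, hE, fun j => ?_, sub_eq_zero.mp hZ⟩
  by_cases hj : cI (t₀, vabs z₀) j = 0
  · have hqj : cI (q.1, vabs q.2) j = c * eI ⟨j, hj⟩ := by
      simpa [sel_mulVec_apply] using congrFun hI ⟨j, hj⟩
    exact hqj ▸ mul_nonneg hc (heI _)
  · exact (hpos j hj).le

theorem IsLocalMinOn.branchStationary {Dt : Set (Fin n → ℝ)} {Dz : Set (Fin s → ℝ)}
    {f : (Fin n → ℝ) → ℝ}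
    (hmin : IsLocalMinOn (fun q : (Fin n → ℝ) × (Fin s → ℝ) => f q.1)
      (absNormalFeasible Dt Dz cE cI cZ) (t₀, z₀))
    (hf : DifferentiableAt ℝ f t₀) (hU : Dt ×ˢ Dz ∈ 𝓝 (t₀, z₀))
    (hE : HasStrictFDerivAt cE (fderiv ℝ cE (t₀, vabs z₀)) (t₀, vabs z₀))
    (hI : HasStrictFDerivAt cI (fderiv ℝ cI (t₀, vabs z₀)) (t₀, vabs z₀))
    (hZ : HasStrictFDerivAt cZ (fderiv ℝ cZ (t₀, vabs z₀)) (t₀, vabs z₀))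
    (hE₀ : cE (t₀, vabs z₀) = 0) (hI₀ : ∀ j, 0 ≤ cI (t₀, vabs z₀) j)
    (hZ₀ : cZ (t₀, vabs z₀) = z₀)
    (hsurj : ∀ τ : Fin s → ℝ, (∀ i, z₀ i ≠ 0 → τ i = Real.sign (z₀ i)) →
      Function.Surjective (branchDeriv cE cI cZ (t₀, vabs z₀)
        (fun j => cI (t₀, vabs z₀) j = 0) (fun i => z₀ i = 0) τ)) :
    BranchStationary (fderiv ℝ f t₀) cE cI cZ (t₀, vabs z₀) (fun j => cI (t₀, vabs z₀) j = 0)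
      z₀ := by
  intro τ hτ eI heI eα heα v hv
  have hx₀ : branchScale n τ (t₀, z₀) = (t₀, vabs z₀) := by simp [diagonal_mulVec_eq_vabs hτ]
  refine IsLocalMinOn.hasFDerivAt_nonneg_of_ray
    (f' := (fderiv ℝ f t₀).comp (ContinuousLinearMap.fst ℝ _ _)) hmin
    (hf.hasFDerivAt.comp _ hasFDerivAt_fst) (hasStrictFDerivAt_branchMap hx₀ hE hI hZ)
    (hsurj τ hτ) ?_
  filter_upwards [eventually_mem_absNormalFeasible hU hI.continuousAt hI₀ hτ heI heα]
    with q hq ⟨c, hc, hcq⟩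
  exact hq ⟨c, hc, by rwa [branchMap_eq_zero hτ hE₀ hZ₀, hv, zero_add] at hcq⟩

end Feasibility

section Multipliers

/-- The signs are those of the Lagrangian `f + lEᵀ cE - μIᵀ cI + lZᵀ (cZ - z) - μαᵀ z_α`. -/
def multiplierPairing {ι₁ ι₂ ι₃ ι₄ : Type*} [Fintype ι₁] [Fintype ι₂] [Fintype ι₃] [Fintype ι₄]
    (lE : ι₁ → ℝ) (μI : ι₂ → ℝ) (lZ : ι₃ → ℝ) (μα : ι₄ → ℝ)
    (y : (ι₁ → ℝ) × (ι₂ → ℝ) × (ι₃ → ℝ) × (ι₄ → ℝ)) : ℝ :=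
  lE ⬝ᵥ y.1 - μI ⬝ᵥ y.2.1 + lZ ⬝ᵥ y.2.2.1 - μα ⬝ᵥ y.2.2.2

theorem exists_multiplierPairing {E ι₁ ι₂ ι₃ ι₄ : Type*} [AddCommGroup E] [Module ℝ E]
    [Fintype ι₁] [DecidableEq ι₁] [Fintype ι₂] [DecidableEq ι₂] [Fintype ι₃] [DecidableEq ι₃]
    [Fintype ι₄] [DecidableEq ι₄]
    {A : E →ₗ[ℝ] (ι₁ → ℝ) × (ι₂ → ℝ) × (ι₃ → ℝ) × (ι₄ → ℝ)} (hA : Function.Surjective A)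
    {φ : E →ₗ[ℝ] ℝ} (hφ : ∀ v, A v = 0 → 0 ≤ φ v) :
    ∃ lE μI lZ μα, ∀ x, φ x + multiplierPairing lE μI lZ μα (A x) = 0 := by
  obtain ⟨ξ, hξ⟩ := LinearMap.exists_eq_comp_of_surjective hA (φ := φ) fun v hv =>
    le_antisymm (by simpa using hφ (-v) (by simp [hv])) (hφ v hv)
  obtain ⟨a, ξ₁, h₁⟩ := ξ.exists_eq_dotProduct_add
  obtain ⟨b, ξ₂, h₂⟩ := ξ₁.exists_eq_dotProduct_add
  obtain ⟨c, ξ₃, h₃⟩ := ξ₂.exists_eq_dotProduct_add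
  obtain ⟨d, h₄⟩ := ξ₃.exists_eq_dotProduct
  refine ⟨-a, b, -c, d, fun x => ?_⟩
  rw [hξ]
  generalize A x = y
  obtain ⟨y₁, y₂, y₃, y₄⟩ := y
  rw [h₁, h₂, h₃, h₄, multiplierPairing]
  simp only [neg_dotProduct]
  ring

variable {n s m₁ m₂ : ℕ} (cE : (Fin n → ℝ) × (Fin s → ℝ) → Fin m₁ → ℝ)
  (cI : (Fin n → ℝ) × (Fin s → ℝ) → Fin m₂ → ℝ) (cZ : (Fin n → ℝ) × (Fin s → ℝ) → Fin s → ℝ)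
  (p : (Fin n → ℝ) × (Fin s → ℝ))

def constraintGrad1 (lE : Fin m₁ → ℝ) (lI : Fin m₂ → ℝ) (lZ : Fin s → ℝ) : Fin n → ℝ :=
  (jac1 cE p)ᵀ *ᵥ lE - (jac1 cI p)ᵀ *ᵥ lI + (jac1 cZ p)ᵀ *ᵥ lZ

def constraintGrad2 (lE : Fin m₁ → ℝ) (lI : Fin m₂ → ℝ) (lZ : Fin s → ℝ) : Fin s → ℝ :=
  (jac2 cE p)ᵀ *ᵥ lE - (jac2 cI p)ᵀ *ᵥ lI + (jac2 cZ p)ᵀ *ᵥ lZ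

theorem multiplierPairing_branchDeriv {act : Fin m₂ → Prop} {alph : Fin s → Prop}
    [DecidablePred act] [DecidablePred alph] (lE : Fin m₁ → ℝ) (μI : {j // act j} → ℝ)
    (lZ : Fin s → ℝ) (μα : {i // alph i} → ℝ) (τ : Fin s → ℝ) (u : Fin n → ℝ) (w : Fin s → ℝ) :
    multiplierPairing lE μI lZ μα (branchDeriv cE cI cZ p act alph τ (u, w)) =
      constraintGrad1 cE cI cZ p lE ((sel act)ᵀ *ᵥ μI) lZ ⬝ᵥ u +
        constraintGrad2 cE cI cZ p lE ((sel act)ᵀ *ᵥ μI) lZ ⬝ᵥ (diagonal τ *ᵥ w) -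
        (lZ + (sel alph)ᵀ *ᵥ μα) ⬝ᵥ w := by
  simp only [multiplierPairing, branchDeriv_apply, constraintGrad1, constraintGrad2,
    add_dotProduct, sub_dotProduct, dotProduct_add, dotProduct_sub, mulVec_add, mulVec_transpose,
    ← dotProduct_mulVec]
  ring

end Multipliers

section KinkStationarity

variable {n s m₁ m₂ : ℕ} {cE : (Fin n → ℝ) × (Fin s → ℝ) → Fin m₁ → ℝ}
  {cI : (Fin n → ℝ) × (Fin s → ℝ) → Fin m₂ → ℝ} {cZ : (Fin n → ℝ) × (Fin s → ℝ) → Fin s → ℝ}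
  {p : (Fin n → ℝ) × (Fin s → ℝ)} {act : Fin m₂ → Prop} [DecidablePred act]
  {f' : (Fin n → ℝ) →L[ℝ] ℝ} {lE : Fin m₁ → ℝ} {μI : {j // act j} → ℝ} {lZ : Fin s → ℝ}

section

variable {alph : Fin s → Prop} [DecidablePred alph] {σ : Fin s → ℝ} {μα : {i // alph i} → ℝ}

theorem grad_add_jac1_eq_zero
    (hstat : ∀ x, f' x.1 +
      multiplierPairing lE μI lZ μα (branchDeriv cE cI cZ p act alph σ x) = 0) :
    (fun j => f' (Pi.single j 1)) + (jac1 cE p)ᵀ *ᵥ lE - (jac1 cI p)ᵀ *ᵥ ((sel act)ᵀ *ᵥ μI) +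
      (jac1 cZ p)ᵀ *ᵥ lZ = 0 := by
  ext j
  have h := hstat (Pi.single j 1, 0)
  simp only [multiplierPairing_branchDeriv, dotProduct_single, mulVec_zero, dotProduct_zero,
    sub_zero, add_zero, mul_one, constraintGrad1] at h
  simp only [Pi.add_apply, Pi.sub_apply, Pi.zero_apply] at h ⊢
  linarith

theorem mul_constraintGrad2_eq
    (hstat : ∀ x, f' x.1 +
      multiplierPairing lE μI lZ μα (branchDeriv cE cI cZ p act alph σ x) = 0)
    (i : Fin s) :
    σ i * constraintGrad2 cE cI cZ p lE ((sel act)ᵀ *ᵥ μI) lZ i = lZ i + ((sel alph)ᵀ *ᵥ μα) i := by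
  have h := hstat (0, Pi.single i 1)
  simp only [multiplierPairing_branchDeriv, map_zero, dotProduct_zero, dotProduct_mulVec,
    dotProduct_single, vecMul_diagonal, zero_add, mul_one, Pi.add_apply] at h
  linarith

end

variable {z₀ : Fin s → ℝ} {μα : {i // z₀ i = 0} → ℝ}

theorem constraintGrad2_eq_sign_mul
    (hstat : ∀ x, f' x.1 + multiplierPairing lE μI lZ μα
      (branchDeriv cE cI cZ p act (fun i => z₀ i = 0) (fun i => Real.sign (z₀ i)) x) = 0)
    (i : Fin s) (hi : z₀ i ≠ 0) :
    constraintGrad2 cE cI cZ p lE ((sel act)ᵀ *ᵥ μI) lZ i = Real.sign (z₀ i) * lZ i := by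
  have h := mul_constraintGrad2_eq hstat i
  rw [sel_transpose_mulVec_apply, dif_neg hi, add_zero] at h
  rw [← h, ← mul_assoc]
  rcases Real.sign_apply_eq_of_ne_zero _ hi with hs | hs <;> rw [hs] <;> ring

theorem inequality_multiplier_nonneg
    (hstat : ∀ x, f' x.1 + multiplierPairing lE μI lZ μα
      (branchDeriv cE cI cZ p act (fun i => z₀ i = 0) (fun i => Real.sign (z₀ i)) x) = 0)
    (hray : BranchStationary f' cE cI cZ p act z₀)
    (hsurj : Function.Surjective
      (branchDeriv cE cI cZ p act (fun i => z₀ i = 0) (fun i => Real.sign (z₀ i)))) :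
    0 ≤ μI := by
  intro j
  obtain ⟨v, hv⟩ := hsurj (0, Pi.single j 1, 0, 0)
  have h := hstat v
  simp only [hv, multiplierPairing, dotProduct_zero, dotProduct_single] at h
  have := hray _ (fun _ _ => rfl) (Pi.single j 1) (Pi.single_nonneg.2 zero_le_one) 0 (by simp) v hv
  rw [Pi.zero_apply]
  linarith

theorem abs_le_constraintGrad2
    (hstat : ∀ x, f' x.1 + multiplierPairing lE μI lZ μα
      (branchDeriv cE cI cZ p act (fun i => z₀ i = 0) (fun i => Real.sign (z₀ i)) x) = 0)
    (hray : BranchStationary f' cE cI cZ p act z₀)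
    (hsurj : ∀ τ : Fin s → ℝ, (∀ i, z₀ i ≠ 0 → τ i = Real.sign (z₀ i)) →
      Function.Surjective (branchDeriv cE cI cZ p act (fun i => z₀ i = 0) τ))
    (i : Fin s) (hi : z₀ i = 0) :
    |lZ i| ≤ constraintGrad2 cE cI cZ p lE ((sel act)ᵀ *ᵥ μI) lZ i := by
  have hμα : μα ⟨i, hi⟩ = -lZ i := by
    have h := mul_constraintGrad2_eq hstat i
    rw [sel_transpose_mulVec_apply, dif_pos hi] at h
    simp only [hi, Real.sign_zero, zero_mul] at h
    linarith
  suffices key : ∀ ε : ℝ, ε * ε = 1 →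
      ε * lZ i ≤ constraintGrad2 cE cI cZ p lE ((sel act)ᵀ *ᵥ μI) lZ i from
    abs_le'.2 ⟨by simpa using key 1 (by norm_num), by simpa using key (-1) (by norm_num)⟩
  -- on the branch where the zero kink `i` gets the sign `ε`, the ray `z_i = ε t` is feasible
  intro ε hε
  set σ : Fin s → ℝ := fun k => Real.sign (z₀ k)
  set τ := Function.update σ i ε
  have hτ : ∀ k, z₀ k ≠ 0 → τ k = Real.sign (z₀ k) := fun k hk =>
    Function.update_of_ne (by rintro rfl; exact hk hi) _ _
  set eα : {k // z₀ k = 0} → ℝ := Pi.single ⟨i, hi⟩ ε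
  have heα : ∀ k : {k // z₀ k = 0}, τ k * eα k = |eα k| := by
    intro k
    by_cases hk : k = ⟨i, hi⟩
    · subst hk
      have : |ε| = 1 := by nlinarith [abs_mul_abs_self ε, abs_nonneg ε]
      simp [eα, τ, hε, this]
    · simp [eα, hk]
  obtain ⟨⟨u, w⟩, hv⟩ := hsurj τ hτ (0, 0, 0, eα)
  have hf' := hray τ hτ 0 le_rfl eα heα (u, w) hv
  have hwi : w i = ε := by
    simpa [branchDeriv_apply, sel_mulVec_apply, eα] using congrArg (fun y => y.2.2.2 ⟨i, hi⟩) hv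
  have hτv := multiplierPairing_branchDeriv cE cI cZ p lE μI lZ μα τ u w
  have hσi : σ i = 0 := by simp [σ, hi]
  rw [hv, diagonal_update_mulVec, dotProduct_add, dotProduct_single, hwi, hσi, sub_zero, hε,
    mul_one] at hτv
  simp only [multiplierPairing, dotProduct_zero, dotProduct_single, eα, hμα] at hτv
  have hσv := hstat (u, w)
  rw [multiplierPairing_branchDeriv] at hσv
  linarith

end KinkStationarity

/-- First order necessary optimality conditions (kink stationarity) for the abs-normal
NLP under LIKQ. -/
theorem stmt10 {n s m₁ m₂ : ℕ}
    (Dt : Set (Fin n → ℝ)) (Dz : Set (Fin s → ℝ))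
    (hDt : IsOpen Dt) (hDz : IsOpen Dz)
    (hsym : ∀ z ∈ Dz, ∀ σ : Fin s → ℝ, (∀ i, σ i = -1 ∨ σ i = 0 ∨ σ i = 1) →
      (fun i => σ i * z i) ∈ Dz)
    (f : (Fin n → ℝ) → ℝ)
    (cE : (Fin n → ℝ) × (Fin s → ℝ) → Fin m₁ → ℝ)
    (cI : (Fin n → ℝ) × (Fin s → ℝ) → Fin m₂ → ℝ)
    (cZ : (Fin n → ℝ) × (Fin s → ℝ) → Fin s → ℝ)
    (hf : ContDiffOn ℝ 1 f Dt)
    (hcE : ContDiffOn ℝ 1 cE (Dt ×ˢ Dz))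
    (hcI : ContDiffOn ℝ 1 cI (Dt ×ˢ Dz))
    (hcZ : ContDiffOn ℝ 1 cZ (Dt ×ˢ Dz))
    (hlow : ∀ p ∈ Dt ×ˢ Dz, ∀ i j : Fin s, i ≤ j → jac2 cZ p i j = 0)
    (tstar : Fin n → ℝ) (zstar : Fin s → ℝ)
    (ht : tstar ∈ Dt) (hz : zstar ∈ Dz)
    (hfeasE : cE (tstar, vabs zstar) = 0)
    (hfeasI : ∀ j, 0 ≤ cI (tstar, vabs zstar) j)
    (hfeasZ : cZ (tstar, vabs zstar) = zstar)
    (hmin : IsLocalMinOn (fun q : (Fin n → ℝ) × (Fin s → ℝ) => f q.1)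
      {q | q.1 ∈ Dt ∧ q.2 ∈ Dz ∧ cE (q.1, vabs q.2) = 0 ∧
        (∀ j, 0 ≤ cI (q.1, vabs q.2) j) ∧ cZ (q.1, vabs q.2) = q.2}
      (tstar, zstar))
    (hLIKQ :
      (Matrix.fromRows
        (jac1 cE (tstar, vabs zstar) +
          jac2 cE (tstar, vabs zstar) * Matrix.diagonal (fun i => Real.sign (zstar i)) *
          ((1 - jac2 cZ (tstar, vabs zstar) *
              Matrix.diagonal (fun i => Real.sign (zstar i)))⁻¹ *
            jac1 cZ (tstar, vabs zstar)))
        (Matrix.fromRows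
          (sel (fun j => cI (tstar, vabs zstar) j = 0) *
            (jac1 cI (tstar, vabs zstar) +
              jac2 cI (tstar, vabs zstar) * Matrix.diagonal (fun i => Real.sign (zstar i)) *
              ((1 - jac2 cZ (tstar, vabs zstar) *
                  Matrix.diagonal (fun i => Real.sign (zstar i)))⁻¹ *
                jac1 cZ (tstar, vabs zstar))))
          (sel (fun i => zstar i = 0) *
            ((1 - jac2 cZ (tstar, vabs zstar) *
                Matrix.diagonal (fun i => Real.sign (zstar i)))⁻¹ *
              jac1 cZ (tstar, vabs zstar))))).rank
      = m₁ + Fintype.card {j // cI (tstar, vabs zstar) j = 0} +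
          Fintype.card {i // zstar i = 0}) :
    ∃ (lE : Fin m₁ → ℝ) (lI : Fin m₂ → ℝ) (lZ : Fin s → ℝ),
      (fun j => fderiv ℝ f tstar (Pi.single j 1)) +
        (jac1 cE (tstar, vabs zstar))ᵀ *ᵥ lE -
        (jac1 cI (tstar, vabs zstar))ᵀ *ᵥ lI +
        (jac1 cZ (tstar, vabs zstar))ᵀ *ᵥ lZ = 0 ∧
      (∀ i, zstar i = 0 →
        |lZ i| ≤ ((jac2 cE (tstar, vabs zstar))ᵀ *ᵥ lE -
          (jac2 cI (tstar, vabs zstar))ᵀ *ᵥ lI +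
          (jac2 cZ (tstar, vabs zstar))ᵀ *ᵥ lZ) i) ∧
      (∀ i, zstar i ≠ 0 →
        ((jac2 cE (tstar, vabs zstar))ᵀ *ᵥ lE -
          (jac2 cI (tstar, vabs zstar))ᵀ *ᵥ lI +
          (jac2 cZ (tstar, vabs zstar))ᵀ *ᵥ lZ) i = Real.sign (zstar i) * lZ i) ∧
      (∀ j, 0 ≤ lI j) ∧
      lI ⬝ᵥ cI (tstar, vabs zstar) = 0 := by
  have hvabs : vabs zstar ∈ Dz := by
    have h := hsym zstar hz (fun i => Real.sign (zstar i)) fun i => Real.sign_apply_eq _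
    simp only [Real.sign_mul_eq_abs] at h
    exact h
  have hU : Dt ×ˢ Dz ∈ 𝓝 (tstar, vabs zstar) := (hDt.prod hDz).mem_nhds ⟨ht, hvabs⟩
  have hE := (hcE.contDiffAt hU).hasStrictFDerivAt one_ne_zero
  have hI := (hcI.contDiffAt hU).hasStrictFDerivAt one_ne_zero
  have hZ := (hcZ.contDiffAt hU).hasStrictFDerivAt one_ne_zero
  have hsurj : ∀ τ : Fin s → ℝ, (∀ i, zstar i ≠ 0 → τ i = Real.sign (zstar i)) →
      Function.Surjective (branchDeriv cE cI cZ (tstar, vabs zstar)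
        (fun j => cI (tstar, vabs zstar) j = 0) (fun i => zstar i = 0) τ) := fun τ hτ =>
    branchDeriv_surjective_of_eqOn hτ (branchDeriv_surjective_of_rank (hlow _ ⟨ht, hvabs⟩) hLIKQ)
  have hray := hmin.branchStationary
    ((hf.contDiffAt (hDt.mem_nhds ht)).differentiableAt one_ne_zero)
    ((hDt.prod hDz).mem_nhds ⟨ht, hz⟩) hE hI hZ hfeasE hfeasI hfeasZ hsurj
  obtain ⟨lE, μI, lZ, μα, hstat⟩ := exists_multiplierPairing (hsurj _ fun _ _ => rfl)
    (φ := ((fderiv ℝ f tstar).comp (ContinuousLinearMap.fst ℝ _ _)).toLinearMap)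
    fun v hv => hray _ (fun _ _ => rfl) 0 le_rfl 0 (by simp) v hv
  exact ⟨lE, _, lZ, grad_add_jac1_eq_zero hstat, abs_le_constraintGrad2 hstat hray hsurj,
    constraintGrad2_eq_sign_mul hstat,
    sel_transpose_mulVec_nonneg (inequality_multiplier_nonneg hstat hray (hsurj _ fun _ _ => rfl)),
    sel_transpose_mulVec_dotProduct_eq_zero _ _⟩

end
end
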